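/- arXiv:2108.11313 — 2 statements merged into one kernel-verified Lean document; each statement's English description precedes it below -/
import Mathlib

section
/- Let A ⊆ {2,3,4,...} and let ω be a cyclic word over A represented by uv with u ≠ u* and v ≠ v* (where w* is the reversal of w). If either (u < u* and v* < v) or (u* < u and v < v*) in the lexicographic order, then K̇^∘(u*v) > K̇^∘(uv). -/
/-
For `n ≥ 2`, `K̇(x₁…xₙ)` is the top-left entry of `M(x₁)⋯M(xₙ)` with `M(x) = [[x, -1], [1, 0]]`, whose other
entries are `-K̇(x₁…xₙ₋₁)`, `K̇(x₂…xₙ)`, `-K̇(x₂…xₙ₋₁)`, so `K̇∘(w)` is the trace of that product.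
Conjugation by `diag(1, -1)` transposes every `M(x)`, so the matrix of `u*` is the transpose of
that of `u` up to this conjugation, and the two traces differ by
`K̇∘(u*v) - K̇∘(uv) = (K̇(u₁…uₖ₋₁) - K̇(u₂…uₖ)) (K̇(v₂…vₘ) - K̇(v₁…vₘ₋₁))`.
The sign of each factor is decided lexicographically: for letters `≥ 2` the ratio
`K̇(w) / K̇(w₂…)` is the continued fraction `w₁ - 1/(w₂ - 1/⋯)`, which lies in `(w₁ - 1, w₁]` and
hence increases with `w` in the lexicographic order.
-/

/-- Semi-regular continuant read from the last element: helper on the reversed list. -/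
def contKsf {R : Type*} [Ring R] : List R → R
  | [] => 1
  | [a] => a
  | a :: b :: l => a * contKsf (b :: l) - contKsf l

/-- Semi-regular continuant `K̇`. -/
def contKs {R : Type*} [Ring R] (l : List R) : R := contKsf l.reverse

/-- Cyclic semi-regular continuant: `K̇∘(x₁…xₙ) = K̇(x₁…xₙ) − K̇(x₂…xₙ₋₁)`. -/
def cycKs {R : Type*} [Ring R] (l : List R) : R := contKs l - contKs l.tail.dropLast

/-- The lexicographic order on words induced by the order of the alphabet, with the
convention that `u ≺ v` whenever `v` is a proper prefix of `u`. -/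
def wlt {A : Type*} [LinearOrder A] (u v : List A) : Prop :=
  (v ≠ u ∧ v <+: u) ∨
    ∃ (p s t : List A) (x y : A), x < y ∧ u = p ++ x :: s ∧ v = p ++ y :: t

open Matrix

section Algebra

variable {R : Type*} [CommRing R]

lemma contKs_append_singleton {l : List R} (hl : l ≠ []) (x : R) :
    contKs (l ++ [x]) = x * contKs l - contKs l.dropLast := by
  obtain ⟨a, r, hr⟩ := List.exists_cons_of_ne_nil (List.reverse_ne_nil_iff.mpr hl)
  rw [contKs, contKs, contKs, List.reverse_append, List.reverse_singleton, List.singleton_append,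
    ← List.tail_reverse, hr]
  rfl

def contMat (x : R) : Matrix (Fin 2) (Fin 2) R := !![x, -1; 1, 0]

def contMatProd (w : List R) : Matrix (Fin 2) (Fin 2) R := (w.map contMat).prod

lemma contMatProd_append (u v : List R) :
    contMatProd (u ++ v) = contMatProd u * contMatProd v := by
  simp [contMatProd]

lemma contMatProd_of_two_le_length {w : List R} (hw : 2 ≤ w.length) :
    contMatProd w =
      !![contKs w, -contKs w.dropLast; contKs w.tail, -contKs w.tail.dropLast] := by
  induction w using List.reverseRecOn with
  | nil => simp at hw
  | append_singleton l x ih =>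
    by_cases hl : 2 ≤ l.length
    · have hl₀ : l ≠ [] := List.ne_nil_of_length_pos (by omega)
      have hl₁ : l.tail ≠ [] := List.ne_nil_of_length_pos (by simp; omega)
      rw [contMatProd_append, ih hl, List.tail_append_of_ne_nil hl₀, List.dropLast_concat,
        List.dropLast_concat, contKs_append_singleton hl₀, contKs_append_singleton hl₁]
      ext i j
      fin_cases i <;> fin_cases j <;> simp [contMatProd, contMat] <;> ring
    · obtain ⟨a, rfl⟩ : ∃ a, l = [a] := List.length_eq_one_iff.mp (by simp at hw; omega)
      simp [contMatProd, contMat, contKs, contKsf]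
      ring

lemma contMat_transpose (x : R) :
    (contMat x)ᵀ = !![1, 0; 0, -1] * contMat x * !![1, 0; 0, -1] := by
  ext i j
  fin_cases i <;> fin_cases j <;> simp [contMat]

-- Conjugating by `diag(1, -1)` transposes each `contMat x`, hence reverses the product.
lemma contMatProd_reverse (w : List R) :
    contMatProd w.reverse = !![1, 0; 0, -1] * (contMatProd w)ᵀ * !![1, 0; 0, -1] := by
  have hD : (!![1, 0; 0, -1] : Matrix (Fin 2) (Fin 2) R) * !![1, 0; 0, -1] = 1 := by
    simp [Matrix.one_fin_two]
  induction w with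
  | nil => simp [contMatProd, hD]
  | cons a w ih =>
    have hP : contMatProd (a :: w) = contMat a * contMatProd w := rfl
    rw [List.reverse_cons, contMatProd_append, ih, hP, transpose_mul, contMat_transpose]
    simp only [contMatProd, List.map_cons, List.map_nil, List.prod_cons, List.prod_nil, mul_one,
      ← mul_assoc]
    rw [mul_assoc _ !![1, 0; 0, -1] !![1, 0; 0, -1], hD, mul_one]

lemma contKs_reverse (w : List R) : contKs w.reverse = contKs w := by
  rcases w with _ | ⟨a, _ | ⟨b, r⟩⟩
  · rfl
  · rfl
  · have h := congrFun (congrFun (contMatProd_reverse (a :: b :: r)) 0) 0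
    rw [contMatProd_of_two_le_length (by simp), contMatProd_of_two_le_length (by simp)] at h
    simp only [Matrix.mul_apply, Fin.sum_univ_two, transpose_apply] at h
    simpa using h

lemma contKs_cons {l : List R} (hl : l ≠ []) (x : R) :
    contKs (x :: l) = x * contKs l - contKs l.tail := by
  rw [← contKs_reverse, List.reverse_cons,
    contKs_append_singleton (List.reverse_ne_nil_iff.mpr hl), List.dropLast_reverse,
    contKs_reverse, contKs_reverse]

lemma cycKs_eq_trace {w : List R} (hw : 2 ≤ w.length) : cycKs w = trace (contMatProd w) := by
  rw [cycKs, trace_fin_two, contMatProd_of_two_le_length hw]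
  simp [sub_eq_add_neg]

lemma contMatProd_zero_one_add_one_zero {w : List R} (hw : w ≠ []) :
    contMatProd w 0 1 + contMatProd w 1 0 = contKs w.tail - contKs w.dropLast := by
  rcases w with _ | ⟨a, _ | ⟨b, r⟩⟩
  · simp at hw
  · simp [contMatProd, contMat, contKs, contKsf]
  · rw [contMatProd_of_two_le_length (by simp)]
    simp only [List.dropLast_cons_cons, List.tail_cons, of_apply, cons_val', cons_val_one,
      cons_val_fin_one, cons_val_zero]
    ring

lemma trace_conj_transpose_mul_sub_trace_mul (A B : Matrix (Fin 2) (Fin 2) R) :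
    trace (!![1, 0; 0, -1] * Aᵀ * !![1, 0; 0, -1] * B) - trace (A * B) =
      -(A 0 1 + A 1 0) * (B 0 1 + B 1 0) := by
  simp only [trace_fin_two, Matrix.mul_apply, Fin.sum_univ_two, transpose_apply, of_apply,
    cons_val', cons_val_zero, cons_val_one, cons_val_fin_one]
  ring

lemma cycKs_reverse_append_sub_cycKs {u v : List R} (hu : u ≠ []) (hv : v ≠ []) :
    cycKs (u.reverse ++ v) - cycKs (u ++ v) =
      (contKs u.dropLast - contKs u.tail) * (contKs v.tail - contKs v.dropLast) := by
  have hlen : ∀ u' : List R, u' ≠ [] → 2 ≤ (u' ++ v).length := fun u' hu' => by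
    have := List.length_pos_iff.mpr hu'
    have := List.length_pos_iff.mpr hv
    simp; omega
  rw [cycKs_eq_trace (hlen _ (List.reverse_ne_nil_iff.mpr hu)), cycKs_eq_trace (hlen u hu),
    contMatProd_append, contMatProd_append, contMatProd_reverse,
    trace_conj_transpose_mul_sub_trace_mul, contMatProd_zero_one_add_one_zero hu,
    contMatProd_zero_one_add_one_zero hv]
  ring

end Algebra

section Positivity

variable {w : List ℤ}

lemma one_le_contKs_tail_and_lt (hw : w ≠ []) (h2 : ∀ i ∈ w, 2 ≤ i) :
    1 ≤ contKs w.tail ∧ contKs w.tail < contKs w := by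
  induction w with
  | nil => exact absurd rfl hw
  | cons x l ih =>
    have hx : 2 ≤ x := h2 x List.mem_cons_self
    rcases eq_or_ne l [] with rfl | hl
    · exact ⟨le_rfl, show (1 : ℤ) < x by omega⟩
    · obtain ⟨h1, hlt⟩ := ih hl fun i hi => h2 i (List.mem_cons_of_mem x hi)
      rw [List.tail_cons, contKs_cons hl]
      constructor <;> nlinarith

lemma one_le_contKs (h2 : ∀ i ∈ w, 2 ≤ i) : 1 ≤ contKs w := by
  rcases eq_or_ne w [] with rfl | hw
  · rfl
  · obtain ⟨h1, hlt⟩ := one_le_contKs_tail_and_lt hw h2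
    omega

lemma contKs_tail_lt (hw : w ≠ []) (h2 : ∀ i ∈ w, 2 ≤ i) : contKs w.tail < contKs w :=
  (one_le_contKs_tail_and_lt hw h2).2

end Positivity

lemma contKs_cons_mem_Ioc (x : ℤ) (s : List ℤ) (h2 : ∀ i ∈ x :: s, 2 ≤ i) :
    contKs (x :: s) ∈ Set.Ioc ((x - 1) * contKs s) (x * contKs s) := by
  rcases eq_or_ne s [] with rfl | hs
  · simp [contKs, contKsf]
  · have hs2 : ∀ i ∈ s, 2 ≤ i := fun i hi => h2 i (List.mem_cons_of_mem x hi)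
    have h1 := one_le_contKs (fun i hi => hs2 i (List.mem_of_mem_tail hi))
    have hlt := contKs_tail_lt hs hs2
    rw [contKs_cons hs]
    constructor <;> linarith

lemma contKs_cons_mul_lt_of_lt {x y : ℤ} {s t : List ℤ} (hxy : x < y)
    (hs : ∀ i ∈ x :: s, 2 ≤ i) (ht : ∀ i ∈ y :: t, 2 ≤ i) :
    contKs (x :: s) * contKs t < contKs (y :: t) * contKs s := by
  obtain ⟨-, hxs⟩ := contKs_cons_mem_Ioc x s hs
  obtain ⟨hyt, -⟩ := contKs_cons_mem_Ioc y t ht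
  have hKs : 0 < contKs s := one_le_contKs fun i hi => hs i (List.mem_cons_of_mem x hi)
  have hKt : 0 < contKs t := one_le_contKs fun i hi => ht i (List.mem_cons_of_mem y hi)
  calc contKs (x :: s) * contKs t
      ≤ x * contKs s * contKs t := mul_le_mul_of_nonneg_right hxs hKt.le
    _ ≤ (y - 1) * contKs s * contKs t := by gcongr; omega
    _ = contKs s * ((y - 1) * contKs t) := by ring
    _ < contKs s * contKs (y :: t) := mul_lt_mul_of_pos_left hyt hKs
    _ = contKs (y :: t) * contKs s := mul_comm _ _

lemma contKs_append_cons_mul_tail_lt {p s t : List ℤ} {x y : ℤ} (hxy : x < y)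
    (hs : ∀ i ∈ p ++ x :: s, 2 ≤ i) (ht : ∀ i ∈ p ++ y :: t, 2 ≤ i) :
    contKs (p ++ x :: s) * contKs (p ++ y :: t).tail <
      contKs (p ++ y :: t) * contKs (p ++ x :: s).tail := by
  induction p with
  | nil => exact contKs_cons_mul_lt_of_lt hxy hs ht
  | cons z p ih =>
    have ih := ih (fun i hi => hs i (List.mem_cons_of_mem z hi))
      (fun i hi => ht i (List.mem_cons_of_mem z hi))
    simp only [List.cons_append, List.tail_cons]
    rw [contKs_cons (by simp), contKs_cons (by simp)]
    linear_combination ih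

lemma contKs_mul_tail_lt_of_wlt {a b : List ℤ} (hlen : a.length = b.length)
    (ha : ∀ i ∈ a, 2 ≤ i) (hb : ∀ i ∈ b, 2 ≤ i) (h : wlt a b) :
    contKs a * contKs b.tail < contKs b * contKs a.tail := by
  rcases h with ⟨hne, hpre⟩ | ⟨p, s, t, x, y, hxy, rfl, rfl⟩
  · exact absurd (hpre.eq_of_length hlen.symm) hne
  · exact contKs_append_cons_mul_tail_lt hxy ha hb

lemma contKs_dropLast_lt_tail_of_wlt_reverse {w : List ℤ} (h2 : ∀ i ∈ w, 2 ≤ i)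
    (h : wlt w w.reverse) : contKs w.dropLast < contKs w.tail := by
  have key := contKs_mul_tail_lt_of_wlt (List.length_reverse).symm h2
    (fun i hi => h2 i (List.mem_reverse.mp hi)) h
  rw [contKs_reverse, List.tail_reverse, contKs_reverse] at key
  exact lt_of_mul_lt_mul_left key (by linarith [one_le_contKs h2])

lemma contKs_tail_lt_dropLast_of_reverse_wlt {w : List ℤ} (h2 : ∀ i ∈ w, 2 ≤ i)
    (h : wlt w.reverse w) : contKs w.tail < contKs w.dropLast := by
  have key := contKs_dropLast_lt_tail_of_wlt_reverse
    (fun i hi => h2 i (List.mem_reverse.mp hi)) (by rwa [List.reverse_reverse])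
  rwa [List.dropLast_reverse, List.tail_reverse, contKs_reverse, contKs_reverse] at key

theorem stmt8_general (u v : List ℤ) (hu : u ≠ []) (hv : v ≠ [])
    (h2 : ∀ i ∈ u ++ v, 2 ≤ i)
    (hyp : (wlt u u.reverse ∧ wlt v.reverse v) ∨ (wlt u.reverse u ∧ wlt v v.reverse)) :
    cycKs (u ++ v) < cycKs (u.reverse ++ v) := by
  have h2u : ∀ i ∈ u, 2 ≤ i := fun i hi => h2 i (List.mem_append_left v hi)
  have h2v : ∀ i ∈ v, 2 ≤ i := fun i hi => h2 i (List.mem_append_right u hi)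
  rw [← sub_pos, cycKs_reverse_append_sub_cycKs hu hv]
  rcases hyp with ⟨hu', hv'⟩ | ⟨hu', hv'⟩
  · exact mul_pos_of_neg_of_neg
      (sub_neg.mpr (contKs_dropLast_lt_tail_of_wlt_reverse h2u hu'))
      (sub_neg.mpr (contKs_tail_lt_dropLast_of_reverse_wlt h2v hv'))
  · exact mul_pos
      (sub_pos.mpr (contKs_tail_lt_dropLast_of_reverse_wlt h2u hu'))
      (sub_pos.mpr (contKs_dropLast_lt_tail_of_wlt_reverse h2v hv'))

theorem stmt8 (u v : List ℤ) (hu : u ≠ []) (hv : v ≠ [])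
    (h2 : ∀ i ∈ u ++ v, 2 ≤ i)
    (hur : u ≠ u.reverse) (hvr : v ≠ v.reverse)
    (hyp : (wlt u u.reverse ∧ wlt v.reverse v) ∨ (wlt u.reverse u ∧ wlt v v.reverse)) :
    cycKs (u ++ v) < cycKs (u.reverse ++ v) :=
  stmt8_general u v hu hv h2 hyp
end

section
/- A cyclic word ω over a binary ordered alphabet {a < b} is not balanced if and only if there exists a palindrome x such that both axa and bxb occur as factors of ω; moreover, in that case these two occurrences cannot overlap. -/
/-- The alternating lexicographic order on words: at the first difference, the order of
letters is used at even (0-based) positions and reversed at odd positions; if `v` is a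
proper prefix of `u` then `u ≺_alt v` when `|v|` is even and `v ≺_alt u` when `|v|` is odd. -/
def altlt {A : Type*} [LinearOrder A] (u v : List A) : Prop :=
  (v ≠ u ∧ v <+: u ∧ Even v.length) ∨ (u ≠ v ∧ u <+: v ∧ Odd u.length) ∨
    ∃ (p s t : List A) (x y : A), u = p ++ x :: s ∧ v = p ++ y :: t ∧
      ((Even p.length ∧ x < y) ∨ (Odd p.length ∧ y < x))

/-- `r` is a linear representation (rotation) of the cyclic word represented by `w`. -/
def isRot {A : Type*} (w r : List A) : Prop := ∃ s t : List A, w = s ++ t ∧ r = t ++ s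

/-- `f` is a factor of the cyclic word represented by `w`. -/
def isCFactor {A : Type*} (f w : List A) : Prop := ∃ r : List A, isRot w r ∧ f <:+: r

/-- The cyclic word represented by `w` is singular: every factorization of it into two
nonempty non-palindromes `u`, `v` is synchronizing (`u ≺ u*` iff `v ≺ v*`). -/
def cyclicSingular {A : Type*} [LinearOrder A] (w : List A) : Prop :=
  ∀ u v : List A, u ≠ [] → v ≠ [] → isRot w (u ++ v) →
    u ≠ u.reverse → v ≠ v.reverse → (wlt u u.reverse ↔ wlt v v.reverse)

/-- `δ_b(w) = Σ_{c>b} |w|_c − Σ_{a<b} |w|_a`. -/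
def deltaW {A : Type*} [LinearOrder A] [Fintype A] (w : List A) (b : A) : ℤ :=
  (∑ c ∈ Finset.univ.filter (fun c => b < c), (w.count c : ℤ)) -
    (∑ a ∈ Finset.univ.filter (fun a => a < b), (w.count a : ℤ))

/-!
A pair of equally long factors witnessing imbalance differs by at least two in its number of
`a`s. For a shortest such pair, deleting the first or the last letter must restore balance, which
forces the shape `a y a`, `b z b` with `|y|_a = |z|_a`. If `y ≠ z`, their first difference gives
a shorter witness (`a p a`, `b p b` for the common prefix `p`, or the two tails after it); the
same argument applied to `y` and its reverse shows that `y` is a palindrome.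

The two occurrences cannot overlap: a nonempty border shared by the palindromes `a x a` and
`b x b` would, read backwards, be a prefix of one of them of the same length, while every
nonempty prefix of `a x a` has more `a`s than the equally long prefix of `b x b`.
-/

section Rotation

variable {A : Type*} {f w r : List A}

theorem isRot_iff_isRotated : isRot w r ↔ w ~r r := by
  constructor
  · rintro ⟨s, t, rfl, rfl⟩
    exact List.isRotated_append
  · rintro ⟨n, rfl⟩
    exact ⟨w.take (n % w.length), w.drop (n % w.length), (w.take_append_drop _).symm,
      List.rotate_eq_drop_append_take_mod⟩

theorem isCFactor_of_isRot (hf : isCFactor f w) (hr : isRot w r) : isCFactor f r := by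
  obtain ⟨R, hR, hfR⟩ := hf
  rw [isRot_iff_isRotated] at hR hr
  exact ⟨R, isRot_iff_isRotated.mpr (hr.symm.trans hR), hfR⟩

theorem isCFactor_iff_exists_isRot_append : isCFactor f w ↔ ∃ r, isRot w (f ++ r) := by
  constructor
  · rintro ⟨R, hR, p, q, rfl⟩
    refine ⟨q ++ p, isRot_iff_isRotated.mpr ((isRot_iff_isRotated.mp hR).trans ?_)⟩
    simpa using List.isRotated_append (l := p) (l' := f ++ q)
  · rintro ⟨r, hr⟩
    exact ⟨f ++ r, hr, List.infix_append_left⟩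

theorem isCFactor_of_infix {g : List A} (hg : g <:+: f) (hf : isCFactor f w) : isCFactor g w :=
  let ⟨R, hR, hfR⟩ := hf
  ⟨R, hR, hg.trans hfR⟩

theorem mem_of_isCFactor {c : A} (hf : isCFactor f w) (hc : c ∈ f) : c ∈ w := by
  obtain ⟨r, hr⟩ := isCFactor_iff_exists_isRot_append.mp hf
  exact (isRot_iff_isRotated.mp hr).mem_iff.mpr (List.mem_append_left r hc)

theorem infix_append_append_of_isCFactor_append {u v : List A} (hv : isCFactor v (u ++ r))
    (hlen : v.length ≤ u.length) : v <:+: u ++ r ++ u := by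
  obtain ⟨R, ⟨s, t, hst, rfl⟩, hvR⟩ := hv
  have ht : t <:+ u ++ r := hst ▸ List.suffix_append s t
  have hs : s <+: u ++ r := hst ▸ List.prefix_append s t
  rcases List.infix_append_iff.mp hvR with h | h | ⟨v₁, v₂, rfl, h₁, h₂⟩
  · exact List.infix_append_of_infix_left (h.trans ht.isInfix)
  · exact List.infix_append_of_infix_left (h.trans hs.isInfix)
  · have hv₂ : v₂ <+: u := List.prefix_of_prefix_length_le (h₂.trans hs)
      (List.prefix_append u r) (by simp at hlen; omega)
    exact List.infix_append_iff.mpr (Or.inr (Or.inr ⟨v₁, v₂, rfl, h₁.trans ht, hv₂⟩))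

end Rotation

theorem List.infix_of_infix_append_append {A : Type*} {u v r : List A}
    (hlen : v.length = u.length) (huv : ∀ s, s <:+ u → s <+: v → s = [])
    (hvu : ∀ s, s <:+ v → s <+: u → s = []) (h : v <:+: u ++ r ++ u) : v <:+: r := by
  have nil_of_infix : v <:+: u → v = [] := fun hv =>
    huv v (hv.eq_of_length hlen ▸ List.suffix_refl v) (List.prefix_refl v)
  have hur : v <:+: u ++ r := by
    rcases List.infix_append_iff_ne_nil.mp h with h | h | ⟨v₁, v₂, -, hv₂, rfl, -, h₂⟩
    · exact h
    · exact nil_of_infix h ▸ List.nil_infix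
    · exact absurd (hvu v₂ (List.suffix_append v₁ v₂) h₂) hv₂
  rcases List.infix_append_iff_ne_nil.mp hur with h | h | ⟨v₁, v₂, hv₁, -, rfl, h₁, -⟩
  · exact nil_of_infix h ▸ List.nil_infix
  · exact h
  · exact absurd (huv v₁ h₁ (List.prefix_append v₁ v₂)) hv₁

theorem reverse_cons_append_singleton {A : Type*} {x : List A} (hx : x = x.reverse) (c : A) :
    (c :: (x ++ [c])).reverse = c :: (x ++ [c]) := by
  simp [← hx]

section NonOverlap

variable {A : Type*} [DecidableEq A] {a b : A}

theorem count_cons_append_singleton_self (x : List A) :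
    (a :: (x ++ [a])).count a = x.count a + 2 := by
  simp

theorem count_cons_append_singleton_of_ne (hab : a ≠ b) (x : List A) :
    (b :: (x ++ [b])).count a = x.count a := by
  simp [hab.symm]

theorem count_take_lt_count_take (hab : a ≠ b) (x : List A) {ℓ : ℕ} (hℓ : 0 < ℓ) :
    ((b :: (x ++ [b])).take ℓ).count a < ((a :: (x ++ [a])).take ℓ).count a := by
  obtain ⟨k, rfl⟩ := Nat.exists_eq_add_one_of_ne_zero hℓ.ne'
  rcases le_or_gt k x.length with hk | hk
  · simp [List.take_append_of_le_length hk, hab.symm]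
  · simp [List.take_of_length_le (show (x ++ [a]).length ≤ k by simpa using hk),
      List.take_of_length_le (show (x ++ [b]).length ≤ k by simpa using hk), hab.symm]

theorem count_lt_count_of_prefix (hab : a ≠ b) {x s t : List A} (hs : s <+: a :: (x ++ [a]))
    (ht : t <+: b :: (x ++ [b])) (hlen : s.length = t.length) (ht₀ : t ≠ []) :
    t.count a < s.count a := by
  rw [List.prefix_iff_eq_take] at hs ht
  rw [hs, ht, hlen]
  exact count_take_lt_count_take hab x (List.length_pos_of_ne_nil ht₀)

theorem eq_nil_of_suffix_of_prefix (hab : a ≠ b) {x s : List A} (hx : x = x.reverse)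
    (hs : s <:+ a :: (x ++ [a])) (hs' : s <+: b :: (x ++ [b])) : s = [] := by
  by_contra hne
  have hrev : s.reverse <+: a :: (x ++ [a]) := by
    rw [← reverse_cons_append_singleton hx]; exact List.reverse_prefix.mpr hs
  have := count_lt_count_of_prefix hab hrev hs' (by simp) hne
  simp at this

theorem eq_nil_of_prefix_of_suffix (hab : a ≠ b) {x s : List A} (hx : x = x.reverse)
    (hs : s <+: a :: (x ++ [a])) (hs' : s <:+ b :: (x ++ [b])) : s = [] := by
  by_contra hne
  have hrev : s.reverse <+: b :: (x ++ [b]) := by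
    rw [← reverse_cons_append_singleton hx]; exact List.reverse_prefix.mpr hs'
  have := count_lt_count_of_prefix hab hs hrev (by simp) (by simpa using hne)
  simp at this

theorem exists_isRot_append_infix (hab : a ≠ b) {w x : List A} (hx : x = x.reverse)
    (hu : isCFactor (a :: (x ++ [a])) w) (hv : isCFactor (b :: (x ++ [b])) w) :
    ∃ r, isRot w ((a :: (x ++ [a])) ++ r) ∧ (b :: (x ++ [b])) <:+: r := by
  obtain ⟨r, hr⟩ := isCFactor_iff_exists_isRot_append.mp hu
  refine ⟨r, hr, List.infix_of_infix_append_append (by simp)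
    (fun s hs hs' => eq_nil_of_suffix_of_prefix hab hx hs hs')
    (fun s hs hs' => eq_nil_of_prefix_of_suffix hab hx hs' hs) ?_⟩
  exact infix_append_append_of_isCFactor_append (isCFactor_of_isRot hv hr) (by simp)

end NonOverlap

theorem List.exists_append_cons_of_ne {A : Type*} {y z : List A} (hl : y.length = z.length)
    (hne : y ≠ z) : ∃ p y' z' c d, c ≠ d ∧ y = p ++ c :: y' ∧ z = p ++ d :: z' := by
  induction y generalizing z with
  | nil => exact absurd (List.length_eq_zero_iff.mp hl.symm).symm hne
  | cons c y ih =>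
    obtain ⟨d, z, rfl⟩ := List.exists_cons_of_length_eq_add_one hl.symm
    by_cases hcd : c = d
    · subst hcd
      obtain ⟨p, y', z', c', d', h, rfl, rfl⟩ :=
        ih (by simpa using hl) (fun h => hne (h ▸ rfl))
      exact ⟨c :: p, y', z', c', d', h, rfl, rfl⟩
    · exact ⟨[], y, z, c, d, hcd, rfl, rfl⟩

theorem List.exists_eq_cons_append_singleton {A : Type*} {l : List A} (h : 2 ≤ l.length) :
    ∃ c y e, l = c :: (y ++ [e]) := by
  rcases l with _ | ⟨c, l⟩
  · simp at h
  rcases l.eq_nil_or_concat' with rfl | ⟨y, e, rfl⟩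
  · simp at h
  exact ⟨c, y, e, rfl⟩

section Imbalance

variable {A : Type*} [DecidableEq A] {a b : A}

def IsImbalancedPair (a : A) (u v : List A) : Prop :=
  u.length = v.length ∧ v.count a + 2 ≤ u.count a

theorem exists_isImbalancedPair_of_ne (hab : a ≠ b) {y z : List A}
    (hy : ∀ c ∈ y, c = a ∨ c = b) (hz : ∀ c ∈ z, c = a ∨ c = b) (hl : y.length = z.length)
    (hc : y.count a = z.count a) (hne : y ≠ z) :
    ∃ U V, U <:+: a :: (y ++ [a]) ∧ V <:+: b :: (z ++ [b]) ∧ U.length < y.length + 2 ∧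
      IsImbalancedPair a U V := by
  obtain ⟨p, y', z', c, d, hcd, rfl, rfl⟩ := List.exists_append_cons_of_ne hl hne
  rcases hy c (by simp) with hc | hc <;> rcases hz d (by simp) with hd | hd <;> subst c d
  · exact absurd rfl hcd
  · exact ⟨a :: (p ++ [a]), b :: (p ++ [b]), ⟨[], y' ++ [a], by simp⟩,
      ⟨[], z' ++ [b], by simp⟩, by simp, by simp, by simp [hab.symm]⟩
  · refine ⟨y' ++ [a], z' ++ [b], ⟨a :: p ++ [b], [], by simp⟩, ⟨b :: p ++ [a], [], by simp⟩,
      by simp; omega, ?_, ?_⟩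
    · simpa using hl
    · simp [hab.symm] at hc ⊢
      omega
  · exact absurd rfl hcd

theorem exists_eq_cons_append_of_isImbalancedPair (hab : a ≠ b) {u v : List A}
    (hu : ∀ c ∈ u, c = a ∨ c = b) (hv : ∀ c ∈ v, c = a ∨ c = b) (huv : IsImbalancedPair a u v)
    (hmin : ∀ U V, U <:+: u → V <:+: v → U.length < u.length → ¬ IsImbalancedPair a U V) :
    ∃ y z, u = a :: (y ++ [a]) ∧ v = b :: (z ++ [b]) ∧ y.count a = z.count a := by
  obtain ⟨hlen, hcount⟩ := huv
  have h2 : 2 ≤ u.length := le_trans (by omega) (List.count_le_length (a := a))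
  obtain ⟨c, y, e, rfl⟩ := List.exists_eq_cons_append_singleton h2
  obtain ⟨c', z, e', rfl⟩ := List.exists_eq_cons_append_singleton (hlen ▸ h2)
  have hpre := hmin (c :: y) (c' :: z) (List.prefix_append _ [e]).isInfix
    (List.prefix_append _ [e']).isInfix (by simp)
  have hsuf := hmin (y ++ [e]) (z ++ [e']) (List.suffix_cons c _).isInfix
    (List.suffix_cons c' _).isInfix (by simp)
  simp only [IsImbalancedPair, List.length_cons, List.length_append,
    List.count_cons, List.count_append, beq_iff_eq, not_and, not_le]
    at hlen hcount hpre hsuf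
  rcases hu c (by simp) with hc | hc <;> rcases hu e (by simp) with he | he <;>
    rcases hv c' (by simp) with hc' | hc' <;> rcases hv e' (by simp) with he' | he' <;>
    subst c e c' e' <;> simp only [if_pos, if_neg hab.symm] at hcount hpre hsuf <;>
    first | omega | exact ⟨y, z, rfl, rfl, by omega⟩

theorem exists_palindrome_of_isImbalancedPair (hab : a ≠ b) {F : List A → Prop}
    (hF : ∀ ⦃s t⦄, s <:+: t → F t → F s) (hbin : ∀ ⦃s⦄, F s → ∀ c ∈ s, c = a ∨ c = b)
    {u v : List A} (hu : F u) (hv : F v) (huv : IsImbalancedPair a u v) :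
    ∃ x, x = x.reverse ∧ F (a :: (x ++ [a])) ∧ F (b :: (x ++ [b])) := by
  induction hn : u.length using Nat.strong_induction_on generalizing u v with
  | _ n ih =>
  by_cases hshort : ∃ U V, F U ∧ F V ∧ U.length < n ∧ IsImbalancedPair a U V
  · obtain ⟨U, V, hU, hV, hlt, hUV⟩ := hshort
    exact ih _ hlt hU hV hUV rfl
  push Not at hshort
  obtain ⟨y, z, rfl, rfl, hyz⟩ := exists_eq_cons_append_of_isImbalancedPair hab (hbin hu)
    (hbin hv) huv fun U V hU hV hlt => hshort U V (hF hU hu) (hF hV hv) (hn ▸ hlt)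
  have hmin : ∀ U V, U <:+: a :: (y ++ [a]) → V <:+: b :: (z ++ [b]) →
      U.length < y.length + 2 → ¬ IsImbalancedPair a U V :=
    fun U V hU hV hlt => hshort U V (hF hU hu) (hF hV hv) (by simp at hn; omega)
  have hy : ∀ c ∈ y, c = a ∨ c = b := fun c hc => hbin hu c (by simp [hc])
  obtain rfl : y = z := by
    by_contra hne
    obtain ⟨U, V, hU, hV, hlt, hUV⟩ := exists_isImbalancedPair_of_ne hab hy
      (fun c hc => hbin hv c (by simp [hc])) (by simpa using huv.1) hyz hne
    exact hmin U V hU hV hlt hUV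
  refine ⟨y, ?_, hu, hv⟩
  by_contra hne
  obtain ⟨U, V, hU, hV, hlt, hUV⟩ := exists_isImbalancedPair_of_ne (z := y.reverse) hab hy
    (by simpa using hy) (by simp) (by simp) hne
  have hV' : V.reverse <:+: b :: (y ++ [b]) := by
    simpa using List.reverse_infix.mpr hV
  exact hmin U V.reverse hU hV' hlt ⟨by simp [hUV.1], by simpa using hUV.2⟩

end Imbalance

theorem stmt19_general {A : Type*} [LinearOrder A] (a b : A) (hab : a < b) (w : List A)
    (hbin : ∀ c ∈ w, c = a ∨ c = b) :
    ((¬ ∀ u v : List A, isCFactor u w → isCFactor v w → u.length = v.length →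
        ((u.count a : ℤ) - (v.count a : ℤ)).natAbs ≤ 1) ↔
      ∃ x : List A, x = x.reverse ∧
        isCFactor (a :: (x ++ [a])) w ∧ isCFactor (b :: (x ++ [b])) w) ∧
    (∀ x : List A, x = x.reverse →
      isCFactor (a :: (x ++ [a])) w → isCFactor (b :: (x ++ [b])) w →
        ∃ r : List A, isRot w ((a :: (x ++ [a])) ++ r) ∧ (b :: (x ++ [b])) <:+: r) := by
  refine ⟨⟨fun hunbal => ?_, fun ⟨x, _, hax, hbx⟩ hbal => ?_⟩,
    fun x hx => exists_isRot_append_infix hab.ne hx⟩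
  · push Not at hunbal
    obtain ⟨u, v, hu, hv, hlen, hcount⟩ := hunbal
    have hF : ∀ ⦃s t⦄, s <:+: t → isCFactor t w → isCFactor s w :=
      fun _ _ => isCFactor_of_infix
    have hbinF : ∀ ⦃s⦄, isCFactor s w → ∀ c ∈ s, c = a ∨ c = b :=
      fun _ hs c hc => hbin c (mem_of_isCFactor hs hc)
    rcases (by omega : v.count a + 2 ≤ u.count a ∨ u.count a + 2 ≤ v.count a) with h | h
    · exact exists_palindrome_of_isImbalancedPair hab.ne hF hbinF hu hv ⟨hlen, h⟩
    · exact exists_palindrome_of_isImbalancedPair hab.ne hF hbinF hv hu ⟨hlen.symm, h⟩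
  · have h := hbal _ _ hax hbx (by simp)
    rw [count_cons_append_singleton_self, count_cons_append_singleton_of_ne hab.ne] at h
    omega

theorem stmt19 {A : Type*} [LinearOrder A] (a b : A) (hab : a < b) (w : List A)
    (hbin : ∀ c ∈ w, c = a ∨ c = b) (hne : w ≠ []) :
    ((¬ ∀ u v : List A, isCFactor u w → isCFactor v w → u.length = v.length →
        ((u.count a : ℤ) - (v.count a : ℤ)).natAbs ≤ 1) ↔
      ∃ x : List A, x = x.reverse ∧
        isCFactor (a :: (x ++ [a])) w ∧ isCFactor (b :: (x ++ [b])) w) ∧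
    (∀ x : List A, x = x.reverse →
      isCFactor (a :: (x ++ [a])) w → isCFactor (b :: (x ++ [b])) w →
        ∃ r : List A, isRot w ((a :: (x ++ [a])) ++ r) ∧ (b :: (x ++ [b])) <:+: r) :=
  stmt19_general a b hab w hbin
end
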